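/- Lower bound for the negative second Robin eigenvalue of the ball via Amos's inequality: let n ≥ 2, α < −1, and suppose y > 0 satisfies y·I_{n/2+1}(y)/I_{n/2}(y) = −(α+1). Then −y² ≥ −(α+1)² + (n+2)(α+1). -/

import Mathlib

/-!
The ratio `r ν = y I_{ν+1}(y) / I_ν(y)` satisfies `r ν * (2(ν+1) + r (ν+1)) = y²`, which is the
three-term recurrence `I_ν - I_{ν+2} = (2(ν+1)/y) I_{ν+1}`. Through this identity the upper bound
`r ν * (r ν + 2ν) ≤ y²` at `ν + 1` gives Amos's lower bound `y² ≤ r ν * (r ν + 2(ν+1))` at `ν`,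
and the lower bound at `ν + 1` gives the upper bound at `ν`. The upper bound holds outright once
`y² ≤ 4(ν+1)`, by the termwise estimate `I_{ν+1} ≤ y/(2(ν+1)) I_ν`, so a descending induction in
steps of two gives both bounds for every `ν > -1`. At `ν = n/2`, where `r ν = -(α+1)`, the lower
bound is the claim.
-/

/-- Modified Bessel function of the first kind. -/
noncomputable def besselI (ν x : ℝ) : ℝ :=
  ∑' k : ℕ, (x / 2) ^ (ν + 2 * (k : ℝ)) / (Nat.factorial k * Real.Gamma (ν + k + 1))

open Real Filter

noncomputable def besselTerm (ν y : ℝ) (k : ℕ) : ℝ :=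
  (y / 2) ^ (ν + 2 * (k : ℝ)) / (Nat.factorial k * Gamma (ν + k + 1))

theorem besselI_eq_tsum_besselTerm (ν y : ℝ) : besselI ν y = ∑' k, besselTerm ν y k := rfl

noncomputable def besselRatio (ν y : ℝ) : ℝ := y * besselI (ν + 1) y / besselI ν y

section

variable {ν y : ℝ}

theorem besselTerm_pos (hν : -1 < ν) (hy : 0 < y) (k : ℕ) : 0 < besselTerm ν y k := by
  have hk : (0 : ℝ) ≤ k := k.cast_nonneg
  exact div_pos (rpow_pos_of_pos (by positivity) _)
    (mul_pos (by positivity) (Gamma_pos_of_pos (by linarith)))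

theorem besselTerm_succ (hν : -1 < ν) (hy : 0 < y) (k : ℕ) :
    besselTerm ν y (k + 1) = (y / 2) ^ 2 / ((k + 1) * (ν + k + 1)) * besselTerm ν y k := by
  have hA : 0 < ν + k + 1 := by linarith [k.cast_nonneg (α := ℝ)]
  have hpow :
      (y / 2) ^ (ν + 2 * ((k + 1 : ℕ) : ℝ)) = (y / 2) ^ (ν + 2 * (k : ℝ)) * (y / 2) ^ 2 := by
    rw [← rpow_two, ← rpow_add (by positivity)]
    push_cast
    ring_nf
  have hGamma : Gamma (ν + ((k + 1 : ℕ) : ℝ) + 1) = (ν + k + 1) * Gamma (ν + k + 1) := by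
    rw [← Gamma_add_one hA.ne']
    push_cast
    ring_nf
  have := Gamma_pos_of_pos hA
  rw [besselTerm, besselTerm, hpow, hGamma, Nat.factorial_succ]
  push_cast
  field_simp

theorem besselTerm_add_one (hν : -1 < ν) (hy : 0 < y) (k : ℕ) :
    besselTerm (ν + 1) y k = y / 2 / (ν + k + 1) * besselTerm ν y k := by
  have hA : 0 < ν + k + 1 := by linarith [k.cast_nonneg (α := ℝ)]
  have hpow : (y / 2) ^ (ν + 1 + 2 * (k : ℝ)) = (y / 2) ^ (ν + 2 * (k : ℝ)) * (y / 2) := by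
    rw [add_right_comm, rpow_add (by positivity), rpow_one]
  have hGamma : Gamma (ν + 1 + k + 1) = (ν + k + 1) * Gamma (ν + k + 1) := by
    rw [← Gamma_add_one hA.ne']
    ring_nf
  have := Gamma_pos_of_pos hA
  rw [besselTerm, besselTerm, hpow, hGamma]
  field_simp

theorem summable_besselTerm (hν : -1 < ν) (hy : 0 < y) : Summable (besselTerm ν y) := by
  refine summable_of_ratio_norm_eventually_le (r := 1 / 2) (by norm_num) ?_
  filter_upwards [eventually_ge_atTop ⌈y ^ 2⌉₊] with k hk
  have hyk : y ^ 2 ≤ k := Nat.ceil_le.1 hk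
  have hpos := besselTerm_pos hν hy k
  rw [norm_of_nonneg (besselTerm_pos hν hy (k + 1)).le, norm_of_nonneg hpos.le,
    besselTerm_succ hν hy k]
  refine mul_le_mul_of_nonneg_right ?_ hpos.le
  rw [div_le_iff₀ (by nlinarith)]
  nlinarith

theorem besselI_pos (hν : -1 < ν) (hy : 0 < y) : 0 < besselI ν y :=
  (summable_besselTerm hν hy).tsum_pos (fun k => (besselTerm_pos hν hy k).le) 0
    (besselTerm_pos hν hy 0)

theorem besselI_add_one_le (hν : -1 < ν) (hy : 0 < y) :
    besselI (ν + 1) y ≤ y / (2 * (ν + 1)) * besselI ν y := by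
  rw [besselI_eq_tsum_besselTerm, besselI_eq_tsum_besselTerm, ← tsum_mul_left]
  refine (summable_besselTerm (by linarith) hy).tsum_le_tsum (fun k => ?_)
    ((summable_besselTerm hν hy).mul_left _)
  rw [besselTerm_add_one hν hy k, div_div]
  exact mul_le_mul_of_nonneg_right
    (div_le_div_of_nonneg_left hy.le (by linarith) (by linarith [k.cast_nonneg (α := ℝ)]))
    (besselTerm_pos hν hy k).le

theorem besselI_sub_besselI_add_two (hν : -1 < ν) (hy : 0 < y) :
    besselI ν y - besselI (ν + 2) y = 2 * (ν + 1) / y * besselI (ν + 1) y := by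
  have hs := summable_besselTerm hν hy
  have hs₁ := summable_besselTerm (ν := ν + 1) (by linarith) hy
  have hs₂ := summable_besselTerm (ν := ν + 2) (by linarith) hy
  have hterm (k : ℕ) : besselTerm ν y (k + 1) - besselTerm (ν + 2) y k =
      2 * (ν + 1) / y * besselTerm (ν + 1) y (k + 1) := by
    have hA : 0 < ν + k + 1 := by linarith [k.cast_nonneg (α := ℝ)]
    have hA' : ν + k + 2 ≠ 0 := by linarith
    rw [show ν + 2 = ν + 1 + 1 by ring, besselTerm_add_one (by linarith) hy k,
      besselTerm_add_one hν hy (k + 1), besselTerm_add_one hν hy k, besselTerm_succ hν hy k]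
    push_cast
    rw [show ν + 1 + (k : ℝ) + 1 = ν + k + 2 by ring,
      show ν + ((k : ℝ) + 1) + 1 = ν + k + 2 by ring]
    field_simp
    ring
  have hzero : besselTerm ν y 0 = 2 * (ν + 1) / y * besselTerm (ν + 1) y 0 := by
    have : ν + 1 ≠ 0 := by linarith
    rw [besselTerm_add_one hν hy 0, Nat.cast_zero, add_zero]
    field_simp
  calc besselI ν y - besselI (ν + 2) y
      = besselTerm ν y 0 + ∑' k, (besselTerm ν y (k + 1) - besselTerm (ν + 2) y k) := by
        rw [besselI_eq_tsum_besselTerm, besselI_eq_tsum_besselTerm, hs.tsum_eq_zero_add,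
          ((summable_nat_add_iff 1).2 hs).tsum_sub hs₂]
        ring
    _ = 2 * (ν + 1) / y * besselI (ν + 1) y := by
        rw [hzero, tsum_congr hterm, tsum_mul_left, ← mul_add, besselI_eq_tsum_besselTerm,
          hs₁.tsum_eq_zero_add]

theorem besselRatio_pos (hν : -1 < ν) (hy : 0 < y) : 0 < besselRatio ν y := by
  have := besselI_pos hν hy
  have := besselI_pos (ν := ν + 1) (by linarith) hy
  unfold besselRatio
  positivity

theorem besselRatio_le (hν : -1 < ν) (hy : 0 < y) : besselRatio ν y ≤ y ^ 2 / (2 * (ν + 1)) := by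
  rw [besselRatio, div_le_iff₀ (besselI_pos hν hy)]
  calc y * besselI (ν + 1) y ≤ y * (y / (2 * (ν + 1)) * besselI ν y) :=
        mul_le_mul_of_nonneg_left (besselI_add_one_le hν hy) hy.le
    _ = y ^ 2 / (2 * (ν + 1)) * besselI ν y := by ring

theorem besselRatio_mul_add_besselRatio_add_one (hν : -1 < ν) (hy : 0 < y) :
    besselRatio ν y * (2 * (ν + 1) + besselRatio (ν + 1) y) = y ^ 2 := by
  have hrec := besselI_sub_besselI_add_two hν hy
  have := besselI_pos hν hy
  have := besselI_pos (ν := ν + 1) (by linarith) hy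
  rw [besselRatio, besselRatio, show ν + 1 + 1 = ν + 2 by ring]
  field_simp at hrec ⊢
  linear_combination -hrec

theorem besselRatio_mul_add_le_sq_of_sq_le (hν : -1 < ν) (hy : 0 < y) (h : y ^ 2 ≤ 4 * (ν + 1)) :
    besselRatio ν y * (besselRatio ν y + 2 * ν) ≤ y ^ 2 := by
  have hpos := besselRatio_pos hν hy
  have hle := besselRatio_le hν hy
  have hle₂ : besselRatio ν y ≤ 2 := hle.trans ((div_le_iff₀ (by linarith)).2 (by linarith))
  have hle₁ : besselRatio ν y * (2 * (ν + 1)) ≤ y ^ 2 := (le_div_iff₀ (by linarith)).1 hle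
  nlinarith

-- By the recurrence, hypothesis and conclusion both say `besselRatio (ν + 1) y ≤ besselRatio ν y`.
theorem sq_le_besselRatio_mul_add_of_succ (hν : -1 < ν) (hy : 0 < y)
    (h : besselRatio (ν + 1) y * (besselRatio (ν + 1) y + 2 * (ν + 1)) ≤ y ^ 2) :
    y ^ 2 ≤ besselRatio ν y * (besselRatio ν y + 2 * (ν + 1)) := by
  have hrec := besselRatio_mul_add_besselRatio_add_one hν hy
  have := besselRatio_pos hν hy
  have := besselRatio_pos (ν := ν + 1) (by linarith) hy
  nlinarith

theorem besselRatio_mul_add_le_sq_of_succ (hν : -1 < ν) (hy : 0 < y)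
    (h : y ^ 2 ≤ besselRatio (ν + 1) y * (besselRatio (ν + 1) y + 2 * (ν + 1 + 1))) :
    besselRatio ν y * (besselRatio ν y + 2 * ν) ≤ y ^ 2 := by
  have hrec := besselRatio_mul_add_besselRatio_add_one hν hy
  have := besselRatio_pos hν hy
  have := besselRatio_pos (ν := ν + 1) (by linarith) hy
  nlinarith

theorem besselRatio_mul_add_le_sq (hν : -1 < ν) (hy : 0 < y) :
    besselRatio ν y * (besselRatio ν y + 2 * ν) ≤ y ^ 2 := by
  suffices h : ∀ K : ℕ, ∀ μ : ℝ, -1 < μ → y ^ 2 ≤ 4 * (μ + 1) + 8 * K →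
      besselRatio μ y * (besselRatio μ y + 2 * μ) ≤ y ^ 2 from
    h ⌈y ^ 2⌉₊ ν hν (by linarith [Nat.le_ceil (y ^ 2)])
  intro K
  induction K with
  | zero => exact fun μ hμ hK => besselRatio_mul_add_le_sq_of_sq_le hμ hy (by simpa using hK)
  | succ K ih =>
    intro μ hμ hK
    push_cast at hK
    exact besselRatio_mul_add_le_sq_of_succ hμ hy <| sq_le_besselRatio_mul_add_of_succ
      (by linarith) hy (ih (μ + 1 + 1) (by linarith) (by linarith))

theorem sq_le_besselRatio_mul_add (hν : -1 < ν) (hy : 0 < y) :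
    y ^ 2 ≤ besselRatio ν y * (besselRatio ν y + 2 * (ν + 1)) :=
  sq_le_besselRatio_mul_add_of_succ hν hy (besselRatio_mul_add_le_sq (by linarith) hy)

end

theorem second_robin_eigenvalue_lower_bound_general (n : ℕ) (α : ℝ)
    (y : ℝ) (hy : 0 < y)
    (heq : y * besselI ((n : ℝ) / 2 + 1) y / besselI ((n : ℝ) / 2) y = -(α + 1)) :
    -(α + 1) ^ 2 + (n + 2) * (α + 1) ≤ -y ^ 2 := by
  have amos := sq_le_besselRatio_mul_add (ν := (n : ℝ) / 2)
    (neg_one_lt_zero.trans_le (by positivity)) hy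
  rw [besselRatio, heq] at amos
  linarith

theorem second_robin_eigenvalue_lower_bound (n : ℕ) (hn : 2 ≤ n) (α : ℝ) (hα : α < -1)
    (y : ℝ) (hy : 0 < y)
    (heq : y * besselI ((n : ℝ) / 2 + 1) y / besselI ((n : ℝ) / 2) y = -(α + 1)) :
    -(α + 1) ^ 2 + (n + 2) * (α + 1) ≤ -y ^ 2 :=
  second_robin_eigenvalue_lower_bound_general n α y hy heq
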